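/- Suppose γ ∈ (0,1] and σ' > 0 satisfies ‖Aβ‖² ≤ (σ'/γ) Σ_{k=1}^K ‖Aβ_[k]‖² for all β ∈ ℝ^n, each ℓ_i is μ-strongly convex with μ > 0, f is (1/τ)-smooth, Θ ∈ [0,1), and D attains its minimum at α*. Let α ∈ ℝ^n with D(α) < ∞ and set α⁺ := α + γ Σ_{k=1}^K Δα_[k], where each Δα_[k] is a Θ-approximate solution of the k-th subproblem at (Aα, α_[k]). Then D(α⁺) − D(α*) ≤ (1 − γ(1 − Θ) · τμ/(τμ + σ_max σ')) (D(α) − D(α*)), where σ_max := max_k σ_k. -/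

import Mathlib

open scoped BigOperators

noncomputable section

namespace ProxCoCoA

/-- Euclidean dot product on `Fin m → ℝ`. -/
def dotp {m : ℕ} (u v : Fin m → ℝ) : ℝ := ∑ j, u j * v j

/-- Squared Euclidean norm on `Fin m → ℝ`. -/
def sqnorm {m : ℕ} (u : Fin m → ℝ) : ℝ := ∑ j, (u j) ^ 2

/-- The `i`-th column `x_i` of the data matrix `A`. -/
def col {d n : ℕ} (A : Matrix (Fin d) (Fin n) ℝ) (i : Fin n) : Fin d → ℝ := fun j => A j i

/-- The restriction `β_[k]` of a vector to block `k` of the partition given by `part`. -/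
def restr {n K : ℕ} (part : Fin n → Fin K) (k : Fin K) (β : Fin n → ℝ) : Fin n → ℝ :=
  fun i => if part i = k then β i else 0

/-- The block `P_k` of the partition, as a finset. -/
def block {n K : ℕ} (part : Fin n → Fin K) (k : Fin K) : Finset (Fin n) :=
  Finset.univ.filter (fun i => part i = k)

/-- A vector is supported on block `P_k`. -/
def supportedOn {n K : ℕ} (part : Fin n → Fin K) (k : Fin K) (β : Fin n → ℝ) : Prop :=
  ∀ i, part i ≠ k → β i = 0

/-- σ_k := sup { ‖Aβ‖²/‖β‖² : β ≠ 0 supported on P_k }. -/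
def sigmaBlock {d n K : ℕ} (A : Matrix (Fin d) (Fin n) ℝ) (part : Fin n → Fin K)
    (k : Fin K) : ℝ :=
  sSup {r : ℝ | ∃ β : Fin n → ℝ, β ≠ 0 ∧ supportedOn part k β ∧
    r = sqnorm (A.mulVec β) / sqnorm β}

/-- The primal objective `D(α) = f(Aα) + Σᵢ ℓᵢ(αᵢ)`, extended-real valued. -/
def Dobj {d n : ℕ} (f : (Fin d → ℝ) → ℝ) (A : Matrix (Fin d) (Fin n) ℝ)
    (ℓ : Fin n → ℝ → EReal) (α : Fin n → ℝ) : EReal :=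
  (f (A.mulVec α) : EReal) + ∑ i, ℓ i (α i)

/-- The local subproblem objective
`G_k^{σ'}(Δ; v, α) = f(v)/K + ∇f(v)ᵀ A Δ + σ'/(2τ) ‖AΔ‖² + Σ_{i ∈ P_k} ℓᵢ(αᵢ + Δᵢ)`. -/
def Gk {d n K : ℕ} (f : (Fin d → ℝ) → ℝ) (f' : (Fin d → ℝ) → Fin d → ℝ)
    (A : Matrix (Fin d) (Fin n) ℝ) (ℓ : Fin n → ℝ → EReal) (part : Fin n → Fin K)
    (τ σ' : ℝ) (k : Fin K) (v : Fin d → ℝ) (α Δ : Fin n → ℝ) : EReal :=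
  ((f v / K + dotp (f' v) (A.mulVec Δ) + σ' / (2 * τ) * sqnorm (A.mulVec Δ) : ℝ) : EReal)
    + ∑ i ∈ block part k, ℓ i (α i + Δ i)

/-- Fenchel conjugate of a scalar extended-real-valued function. -/
def conj (g : ℝ → EReal) (z : ℝ) : EReal := ⨆ a : ℝ, ((z * a : ℝ) : EReal) - g a

/-- Fenchel conjugate of the (real-valued) smooth part `f`. -/
def fconj {d : ℕ} (f : (Fin d → ℝ) → ℝ) (w : Fin d → ℝ) : EReal :=
  ⨆ v : Fin d → ℝ, ((dotp w v - f v : ℝ) : EReal)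

/-- The dual objective `P(w) = f*(w) + Σᵢ ℓᵢ*(-xᵢᵀ w)`. -/
def Pobj {d n : ℕ} (f : (Fin d → ℝ) → ℝ) (A : Matrix (Fin d) (Fin n) ℝ)
    (ℓ : Fin n → ℝ → EReal) (w : Fin d → ℝ) : EReal :=
  fconj f w + ∑ i, conj (ℓ i) (-(dotp (col A i) w))

/-- The duality gap `G(α) = P(w(α)) + D(α)`, with `w(α) = ∇f(Aα)`. -/
def gap {d n : ℕ} (f : (Fin d → ℝ) → ℝ) (f' : (Fin d → ℝ) → Fin d → ℝ)
    (A : Matrix (Fin d) (Fin n) ℝ) (ℓ : Fin n → ℝ → EReal) (α : Fin n → ℝ) : EReal :=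
  Pobj f A ℓ (f' (A.mulVec α)) + Dobj f A ℓ α

/-- `u ∈ ∂g*(z)`: `u` is a subgradient of the conjugate of `g` at `z`. -/
def IsConjSubgradient (g : ℝ → EReal) (z u : ℝ) : Prop :=
  ∀ y : ℝ, conj g z + ((u * (y - z) : ℝ) : EReal) ≤ conj g y

/-- `g` is proper: never `-∞`, finite somewhere. -/
def ProperFn (g : ℝ → EReal) : Prop := (∀ a, g a ≠ ⊥) ∧ ∃ a, g a ≠ ⊤

/-- `μ`-strong convexity of an extended-real-valued function (`μ = 0` is plain convexity). -/
def StronglyConvexFn (μ : ℝ) (g : ℝ → EReal) : Prop :=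
  ∀ a b t : ℝ, 0 ≤ t → t ≤ 1 →
    g (t * a + (1 - t) * b) + ((μ / 2 * t * (1 - t) * (a - b) ^ 2 : ℝ) : EReal)
      ≤ (t : EReal) * g a + ((1 - t : ℝ) : EReal) * g b

/-- `f'` is a gradient certifying convexity of `f` (first-order lower bound). -/
def ConvexWithGrad {d : ℕ} (f : (Fin d → ℝ) → ℝ) (f' : (Fin d → ℝ) → Fin d → ℝ) : Prop :=
  ∀ u v : Fin d → ℝ, f v + dotp (f' v) (u - v) ≤ f u

/-- `f` is `(1/τ)`-smooth with gradient `f'` (first-order quadratic upper bound). -/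
def SmoothWithGrad {d : ℕ} (τ : ℝ) (f : (Fin d → ℝ) → ℝ)
    (f' : (Fin d → ℝ) → Fin d → ℝ) : Prop :=
  ∀ u v : Fin d → ℝ, f u ≤ f v + dotp (f' v) (u - v) + 1 / (2 * τ) * sqnorm (u - v)

/-- `Δ` is a `Θ`-approximate solution of the `k`-th local subproblem at `(v, α)`. -/
def ThetaApprox {d n K : ℕ} (f : (Fin d → ℝ) → ℝ) (f' : (Fin d → ℝ) → Fin d → ℝ)
    (A : Matrix (Fin d) (Fin n) ℝ) (ℓ : Fin n → ℝ → EReal) (part : Fin n → Fin K)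
    (τ σ' Θ : ℝ) (k : Fin K) (v : Fin d → ℝ) (α Δ : Fin n → ℝ) : Prop :=
  supportedOn part k Δ ∧
    ∃ Δs : Fin n → ℝ, supportedOn part k Δs ∧
      (∀ Δ' : Fin n → ℝ, supportedOn part k Δ' →
        Gk f f' A ℓ part τ σ' k v α Δs ≤ Gk f f' A ℓ part τ σ' k v α Δ') ∧
      Gk f f' A ℓ part τ σ' k v α Δ - Gk f f' A ℓ part τ σ' k v α Δs
        ≤ (Θ : EReal) * (Gk f f' A ℓ part τ σ' k v α 0 - Gk f f' A ℓ part τ σ' k v α Δs)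


lemma aux_coe_sum {ι : Type*} (s : Finset ι) (r : ι → ℝ) :
    ((∑ i ∈ s, r i : ℝ) : EReal) = ∑ i ∈ s, (r i : EReal) :=
  map_sum (⟨⟨Real.toEReal, EReal.coe_zero⟩, EReal.coe_add⟩ : ℝ →+ EReal) r s

lemma aux_add_ne_bot {a b : EReal} (ha : a ≠ ⊥) (hb : b ≠ ⊥) : a + b ≠ ⊥ := by
  simp [EReal.add_eq_bot_iff, ha, hb]

lemma aux_sum_ne_bot {ι : Type*} (s : Finset ι) (g : ι → EReal)
    (h : ∀ i ∈ s, g i ≠ ⊥) : ∑ i ∈ s, g i ≠ ⊥ := by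
  classical
  induction s using Finset.induction with
  | empty => simp
  | @insert a s' hnot ih =>
      rw [Finset.sum_insert hnot]
      exact aux_add_ne_bot (h a (Finset.mem_insert_self a s'))
        (ih fun i hi => h i (Finset.mem_insert_of_mem hi))

lemma aux_sum_ne_top {ι : Type*} (s : Finset ι) (g : ι → EReal)
    (hb : ∀ i ∈ s, g i ≠ ⊥) (ht : ∑ i ∈ s, g i ≠ ⊤) : ∀ i ∈ s, g i ≠ ⊤ := by
  classical
  intro i hi htop
  apply ht
  rw [← Finset.add_sum_erase s g hi, htop]
  exact EReal.top_add_of_ne_bot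
    (aux_sum_ne_bot _ _ fun j hj => hb j (Finset.mem_of_mem_erase hj))

lemma aux_sum_coe {ι : Type*} (s : Finset ι) (g : ι → EReal)
    (hb : ∀ i ∈ s, g i ≠ ⊥) (ht : ∀ i ∈ s, g i ≠ ⊤) :
    ∑ i ∈ s, g i = ((∑ i ∈ s, (g i).toReal : ℝ) : EReal) := by
  rw [aux_coe_sum]
  exact Finset.sum_congr rfl fun i hi => (EReal.coe_toReal (ht i hi) (hb i hi)).symm

lemma aux_le_coe_sub {x : EReal} {c d : ℝ} (h : x + (c : EReal) ≤ (d : EReal)) :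
    x ≤ ((d - c : ℝ) : EReal) := by
  rw [EReal.coe_sub, EReal.le_sub_iff_add_le (by simp) (by simp)]
  exact h

lemma aux_ne_top_of_le_coe {x : EReal} {c : ℝ} (h : x ≤ (c : EReal)) : x ≠ ⊤ := by
  intro h'; rw [h'] at h; exact (EReal.coe_lt_top c).not_ge h

lemma dotp_zero_right {m : ℕ} (u : Fin m → ℝ) : dotp u 0 = 0 := by simp [dotp]

lemma dotp_smul_right {m : ℕ} (c : ℝ) (u v : Fin m → ℝ) : dotp u (c • v) = c * dotp u v := by
  simp [dotp, Finset.mul_sum]; apply Finset.sum_congr rfl; intros; ring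

lemma dotp_sum_right {m : ℕ} {ι : Type*} (s : Finset ι) (u : Fin m → ℝ) (g : ι → Fin m → ℝ) :
    dotp u (∑ k ∈ s, g k) = ∑ k ∈ s, dotp u (g k) := by
  unfold dotp
  have h : ∀ j, u j * (∑ k ∈ s, g k) j = ∑ k ∈ s, u j * g k j := by
    intro j; rw [Finset.sum_apply, Finset.mul_sum]
  simp_rw [h]
  exact Finset.sum_comm

lemma dotp_sub_right {m : ℕ} (u v w : Fin m → ℝ) : dotp u (v - w) = dotp u v - dotp u w := by
  simp [dotp, mul_sub, Finset.sum_sub_distrib]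

lemma aux_mulVec_sum {d n : ℕ} {ι : Type*} (A : Matrix (Fin d) (Fin n) ℝ)
    (t : Finset ι) (g : ι → Fin n → ℝ) :
    A.mulVec (∑ k ∈ t, g k) = ∑ k ∈ t, A.mulVec (g k) := by
  classical
  induction t using Finset.induction with
  | empty => simp [Matrix.mulVec_zero]
  | @insert a s' h ih => simp only [Finset.sum_insert h, Matrix.mulVec_add, ih]

lemma sqnorm_nonneg {m : ℕ} (u : Fin m → ℝ) : 0 ≤ sqnorm u :=
  Finset.sum_nonneg fun i _ => sq_nonneg _

lemma sqnorm_zero {m : ℕ} : sqnorm (0 : Fin m → ℝ) = 0 := by simp [sqnorm]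

lemma sqnorm_smul {m : ℕ} (c : ℝ) (u : Fin m → ℝ) : sqnorm (c • u) = c ^ 2 * sqnorm u := by
  simp [sqnorm, Finset.mul_sum, mul_pow]

lemma sqnorm_pos {m : ℕ} {u : Fin m → ℝ} (h : u ≠ 0) : 0 < sqnorm u := by
  rcases (sqnorm_nonneg u).lt_or_eq with h' | h'
  · exact h'
  · exfalso; apply h; funext i
    have h2 := (Finset.sum_eq_zero_iff_of_nonneg
      (fun i _ => sq_nonneg (u i))).1 h'.symm i (Finset.mem_univ i)
    exact (pow_eq_zero_iff two_ne_zero).1 h2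

lemma sqnorm_mulVec_le_const {d n : ℕ} (A : Matrix (Fin d) (Fin n) ℝ) (β : Fin n → ℝ) :
    sqnorm (A.mulVec β) ≤ (∑ j, ∑ i, (A j i) ^ 2) * sqnorm β := by
  unfold sqnorm
  rw [Finset.sum_mul]
  apply Finset.sum_le_sum
  intro j _
  have h : A.mulVec β j = ∑ i, A j i * β i := by
    simp [Matrix.mulVec, dotProduct]
  rw [h]
  exact Finset.sum_mul_sq_le_sq_mul_sq _ _ _

lemma sigmaBlock_spectral {d n K : ℕ} (A : Matrix (Fin d) (Fin n) ℝ) (part : Fin n → Fin K)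
    {σmax : ℝ} (hσmax : IsGreatest (Set.range (sigmaBlock A part)) σmax)
    (k : Fin K) (β : Fin n → ℝ) (hβ : supportedOn part k β) :
    sqnorm (A.mulVec β) ≤ σmax * sqnorm β := by
  by_cases h0 : β = 0
  · subst h0; simp [Matrix.mulVec_zero, sqnorm_zero]
  · have hpos := sqnorm_pos h0
    set S := {r : ℝ | ∃ b : Fin n → ℝ, b ≠ 0 ∧ supportedOn part k b ∧
      r = sqnorm (A.mulVec b) / sqnorm b} with hS
    have hbdd : BddAbove S := by
      refine ⟨∑ j, ∑ i, (A j i) ^ 2, ?_⟩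
      rintro r ⟨b, hb0, _, rfl⟩
      rw [div_le_iff₀ (sqnorm_pos hb0)]
      exact sqnorm_mulVec_le_const A b
    have hmem : sqnorm (A.mulVec β) / sqnorm β ∈ S := ⟨β, h0, hβ, rfl⟩
    have h1 : sqnorm (A.mulVec β) / sqnorm β ≤ sigmaBlock A part k := le_csSup hbdd hmem
    have h2 : sigmaBlock A part k ≤ σmax := hσmax.2 ⟨k, rfl⟩
    have := h1.trans h2
    rw [div_le_iff₀ hpos] at this
    linarith

lemma sigmamax_nonneg {d n K : ℕ} (A : Matrix (Fin d) (Fin n) ℝ) (part : Fin n → Fin K)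
    {σmax : ℝ} (hσmax : IsGreatest (Set.range (sigmaBlock A part)) σmax) : 0 ≤ σmax := by
  obtain ⟨k, hk⟩ := hσmax.1
  rw [← hk]
  apply Real.sSup_nonneg
  rintro r ⟨b, _, _, rfl⟩
  exact div_nonneg (sqnorm_nonneg _) (sqnorm_nonneg _)

lemma restr_supportedOn {n K : ℕ} (part : Fin n → Fin K) (k : Fin K) (β : Fin n → ℝ) :
    supportedOn part k (restr part k β) := fun _ hi => if_neg hi

lemma sum_restr {n K : ℕ} (part : Fin n → Fin K) (β : Fin n → ℝ) :
    ∑ k, restr part k β = β := by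
  funext i
  rw [Finset.sum_apply]
  simp [restr]

lemma restr_sum_blocks {n K : ℕ} (part : Fin n → Fin K) (Δ : Fin K → Fin n → ℝ)
    (hΔ : ∀ j, supportedOn part j (Δ j)) (k : Fin K) :
    restr part k (∑ j, Δ j) = Δ k := by
  funext i
  unfold restr
  rw [Finset.sum_apply]
  by_cases h : part i = k
  · rw [if_pos h]
    apply Finset.sum_eq_single
    · intro j _ hjk
      exact hΔ j i (by rw [h]; exact fun hh => hjk hh.symm)
    · intro habs; exact absurd (Finset.mem_univ k) habs
  · rw [if_neg h]
    exact (hΔ k i h).symm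

lemma sum_sqnorm_restr {n K : ℕ} (part : Fin n → Fin K) (β : Fin n → ℝ) :
    ∑ k, sqnorm (restr part k β) = sqnorm β := by
  unfold sqnorm restr
  rw [Finset.sum_comm]
  apply Finset.sum_congr rfl
  intro i _
  have h : ∀ k : Fin K, (if part i = k then β i else 0) ^ 2
      = if part i = k then β i ^ 2 else 0 := by
    intro k; split <;> simp
  simp_rw [h]
  simp


lemma sc_real {μ : ℝ} {g : ℝ → EReal} (hg : StronglyConvexFn μ g) 
    {a b t ra rb : ℝ} (ha : g a = (ra : EReal)) (hb : g b = (rb : EReal))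
    (h0 : 0 ≤ t) (h1 : t ≤ 1) :
    g (t * a + (1 - t) * b)
      ≤ ((t * ra + (1 - t) * rb - μ / 2 * t * (1 - t) * (a - b) ^ 2 : ℝ) : EReal) := by
  have h := hg a b t h0 h1
  rw [ha, hb] at h
  have h' : (t : EReal) * ((ra : ℝ) : EReal) + ((1 - t : ℝ) : EReal) * ((rb : ℝ) : EReal)
      = ((t * ra + (1 - t) * rb : ℝ) : EReal) := by
    rw [← EReal.coe_mul, ← EReal.coe_mul, ← EReal.coe_add]
  rw [h'] at h
  exact aux_le_coe_sub h

lemma key_block {d n K : ℕ} (f : (Fin d → ℝ) → ℝ) (f' : (Fin d → ℝ) → Fin d → ℝ)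
    (A : Matrix (Fin d) (Fin n) ℝ) (ℓ : Fin n → ℝ → EReal) (part : Fin n → Fin K)
    (τ σ' Θ : ℝ) (k : Fin K) (v : Fin d → ℝ) (α Δ : Fin n → ℝ)
    (hbot : ∀ i x, ℓ i x ≠ ⊥) (hΘ0 : 0 ≤ Θ) (hΘ1 : Θ < 1)
    (happ : ThetaApprox f f' A ℓ part τ σ' Θ k v α Δ)
    (Δh : Fin n → ℝ) (hΔh : supportedOn part k Δh)
    (e c : ℝ)
    (hG0 : Gk f f' A ℓ part τ σ' k v α 0 = (e : EReal))
    (hGh : Gk f f' A ℓ part τ σ' k v α Δh ≤ (c : EReal)) :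
    (∀ i ∈ block part k, ℓ i (α i + Δ i) ≠ ⊤) ∧
    f v / K + dotp (f' v) (A.mulVec Δ) + σ' / (2 * τ) * sqnorm (A.mulVec Δ)
      + ∑ i ∈ block part k, (ℓ i (α i + Δ i)).toReal ≤ Θ * e + (1 - Θ) * c := by
  obtain ⟨hsupp, Δs, hsuppS, hopt, happrox⟩ := happ
  have h0supp : supportedOn part k (0 : Fin n → ℝ) := fun i _ => rfl
  have hGs_le0 : Gk f f' A ℓ part τ σ' k v α Δs ≤ (e : EReal) := by
    rw [← hG0]; exact hopt 0 h0supp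
  have hGs_lec : Gk f f' A ℓ part τ σ' k v α Δs ≤ (c : EReal) := (hopt Δh hΔh).trans hGh
  have hGk_ne_bot : ∀ Δ' : Fin n → ℝ, Gk f f' A ℓ part τ σ' k v α Δ' ≠ ⊥ := by
    intro Δ'
    unfold Gk
    exact aux_add_ne_bot (EReal.coe_ne_bot _) (aux_sum_ne_bot _ _ fun i _ => hbot i _)
  have hGs_ne_top := aux_ne_top_of_le_coe hGs_le0
  set gs := (Gk f f' A ℓ part τ σ' k v α Δs).toReal with hgs
  have hGs_eq : Gk f f' A ℓ part τ σ' k v α Δs = (gs : EReal) :=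
    (EReal.coe_toReal hGs_ne_top (hGk_ne_bot Δs)).symm
  have hgs_e : gs ≤ e := by rw [hGs_eq] at hGs_le0; exact_mod_cast hGs_le0
  have hgs_c : gs ≤ c := by rw [hGs_eq] at hGs_lec; exact_mod_cast hGs_lec
  rw [hGs_eq, hG0, ← EReal.coe_sub, ← EReal.coe_mul] at happrox
  have hGd_ne_top : Gk f f' A ℓ part τ σ' k v α Δ ≠ ⊤ := by
    intro h
    rw [h, EReal.top_sub_coe] at happrox
    exact (EReal.coe_lt_top _).not_ge happrox
  set gd := (Gk f f' A ℓ part τ σ' k v α Δ).toReal with hgd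
  have hGd_eq : Gk f f' A ℓ part τ σ' k v α Δ = (gd : EReal) :=
    (EReal.coe_toReal hGd_ne_top (hGk_ne_bot Δ)).symm
  rw [hGd_eq, ← EReal.coe_sub] at happrox
  have hreal : gd - gs ≤ Θ * (e - gs) := by exact_mod_cast happrox
  have hsum_ne_top : (∑ i ∈ block part k, ℓ i (α i + Δ i)) ≠ ⊤ := by
    intro h
    apply hGd_ne_top
    unfold Gk
    rw [h]
    exact EReal.add_top_of_ne_bot (EReal.coe_ne_bot _)
  have hterms := aux_sum_ne_top _ _ (fun i _ => hbot i _) hsum_ne_top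
  refine ⟨hterms, ?_⟩
  have hGd_eq2 : Gk f f' A ℓ part τ σ' k v α Δ
      = ((f v / K + dotp (f' v) (A.mulVec Δ) + σ' / (2 * τ) * sqnorm (A.mulVec Δ)
        + ∑ i ∈ block part k, (ℓ i (α i + Δ i)).toReal : ℝ) : EReal) := by
    unfold Gk
    rw [aux_sum_coe _ _ (fun i _ => hbot i _) hterms, ← EReal.coe_add]
  have hdecomp : f v / K + dotp (f' v) (A.mulVec Δ) + σ' / (2 * τ) * sqnorm (A.mulVec Δ)
      + ∑ i ∈ block part k, (ℓ i (α i + Δ i)).toReal = gd := by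
    rw [hGd_eq2] at hGd_eq
    exact_mod_cast hGd_eq
  rw [hdecomp]
  nlinarith [mul_le_mul_of_nonneg_left hgs_c (by linarith : (0:ℝ) ≤ 1 - Θ)]

/-- geometric per-round decrease of the suboptimality for
`μ`-strongly convex `ℓᵢ`. -/
theorem per_round_geometric_decrease {d n K : ℕ} (hK : 0 < K)
    (A : Matrix (Fin d) (Fin n) ℝ) (part : Fin n → Fin K)
    (f : (Fin d → ℝ) → ℝ) (f' : (Fin d → ℝ) → Fin d → ℝ)
    (τ : ℝ) (hτ : 0 < τ)
    (hfconv : ConvexWithGrad f f') (hfsmooth : SmoothWithGrad τ f f')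
    (ℓ : Fin n → ℝ → EReal)
    (hℓproper : ∀ i, ProperFn (ℓ i)) (hℓlsc : ∀ i, LowerSemicontinuous (ℓ i))
    (μ : ℝ) (hμ : 0 < μ) (hℓsc : ∀ i, StronglyConvexFn μ (ℓ i))
    (γ σ' : ℝ) (hγ0 : 0 < γ) (hγ1 : γ ≤ 1) (hσ' : 0 < σ')
    (hsafe : ∀ β : Fin n → ℝ,
      sqnorm (A.mulVec β) ≤ σ' / γ * ∑ k, sqnorm (A.mulVec (restr part k β)))
    (Θ : ℝ) (hΘ0 : 0 ≤ Θ) (hΘ1 : Θ < 1)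
    (σmax : ℝ) (hσmax : IsGreatest (Set.range (sigmaBlock A part)) σmax)
    (αstar : Fin n → ℝ) (hmin : ∀ β : Fin n → ℝ, Dobj f A ℓ αstar ≤ Dobj f A ℓ β)
    (α : Fin n → ℝ) (hα : Dobj f A ℓ α < ⊤)
    (Δα : Fin K → Fin n → ℝ)
    (hΔα : ∀ k, ThetaApprox f f' A ℓ part τ σ' Θ k (A.mulVec α) α (Δα k)) :
    Dobj f A ℓ (α + γ • ∑ k, Δα k) - Dobj f A ℓ αstar
      ≤ ((1 - γ * (1 - Θ) * (τ * μ / (τ * μ + σmax * σ')) : ℝ) : EReal)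
        * (Dobj f A ℓ α - Dobj f A ℓ αstar) := by
  classical
  have hKR : (0:ℝ) < (K:ℝ) := by exact_mod_cast hK
  have hσm0 : 0 ≤ σmax := sigmamax_nonneg A part hσmax
  have hEpos : (0:ℝ) < τ * μ + σmax * σ' := by
    nlinarith [mul_pos hτ hμ, mul_nonneg hσm0 hσ'.le]
  set s : ℝ := τ * μ / (τ * μ + σmax * σ') with hsdef
  have hs0 : 0 ≤ s := by
    rw [hsdef]; exact div_nonneg (by positivity) hEpos.le
  have hs1 : s ≤ 1 := by
    rw [hsdef, div_le_one hEpos]; nlinarith [mul_nonneg hσm0 hσ'.le]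
  have hbot : ∀ i (x : ℝ), ℓ i x ≠ ⊥ := fun i x => (hℓproper i).1 x
  -- finiteness at α
  have hsum_α_ne_top : (∑ i, ℓ i (α i)) ≠ ⊤ := by
    intro h
    apply hα.ne
    unfold Dobj
    rw [h]
    exact EReal.add_top_of_ne_bot (EReal.coe_ne_bot _)
  have hfinα : ∀ i, ℓ i (α i) ≠ ⊤ := fun i =>
    aux_sum_ne_top _ _ (fun j _ => hbot j _) hsum_α_ne_top i (Finset.mem_univ i)
  obtain ⟨Lα, hLα⟩ : ∃ L : Fin n → ℝ, ∀ i, ℓ i (α i) = ((L i : ℝ) : EReal) :=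
    ⟨fun i => (ℓ i (α i)).toReal, fun i => (EReal.coe_toReal (hfinα i) (hbot i _)).symm⟩
  -- finiteness at αstar
  have hDs_lt : Dobj f A ℓ αstar < ⊤ := lt_of_le_of_lt (hmin α) hα
  have hsum_s_ne_top : (∑ i, ℓ i (αstar i)) ≠ ⊤ := by
    intro h
    apply hDs_lt.ne
    unfold Dobj
    rw [h]
    exact EReal.add_top_of_ne_bot (EReal.coe_ne_bot _)
  have hfins : ∀ i, ℓ i (αstar i) ≠ ⊤ := fun i =>
    aux_sum_ne_top _ _ (fun j _ => hbot j _) hsum_s_ne_top i (Finset.mem_univ i)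
  obtain ⟨Ls, hLs⟩ : ∃ L : Fin n → ℝ, ∀ i, ℓ i (αstar i) = ((L i : ℝ) : EReal) :=
    ⟨fun i => (ℓ i (αstar i)).toReal, fun i => (EReal.coe_toReal (hfins i) (hbot i _)).symm⟩
  -- objective values as reals
  have hDα_eq : Dobj f A ℓ α = ((f (A.mulVec α) + ∑ i, Lα i : ℝ) : EReal) := by
    unfold Dobj
    rw [EReal.coe_add, aux_coe_sum]
    congr 1
    exact Finset.sum_congr rfl fun i _ => hLα i
  have hDs_eq : Dobj f A ℓ αstar = ((f (A.mulVec αstar) + ∑ i, Ls i : ℝ) : EReal) := by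
    unfold Dobj
    rw [EReal.coe_add, aux_coe_sum]
    congr 1
    exact Finset.sum_congr rfl fun i _ => hLs i
  have hDsDα : f (A.mulVec αstar) + ∑ i, Ls i ≤ f (A.mulVec α) + ∑ i, Lα i := by
    have h := hmin α
    rw [hDα_eq, hDs_eq] at h
    exact_mod_cast h
  -- the comparison point for the subproblems
  have hΔhsupp : ∀ k, supportedOn part k (restr part k (s • (αstar - α))) :=
    fun k => restr_supportedOn part k _
  -- value of Gk at 0
  have hG0 : ∀ k, Gk f f' A ℓ part τ σ' k (A.mulVec α) α 0
      = ((f (A.mulVec α) / K + ∑ i ∈ block part k, Lα i : ℝ) : EReal) := by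
    intro k
    unfold Gk
    simp only [Matrix.mulVec_zero, dotp_zero_right, sqnorm_zero, mul_zero, add_zero,
      Pi.zero_apply]
    rw [EReal.coe_add, aux_coe_sum]
    congr 1
    exact Finset.sum_congr rfl fun i _ => hLα i
  -- bound on Gk at the comparison point
  have hGh : ∀ k, Gk f f' A ℓ part τ σ' k (A.mulVec α) α (restr part k (s • (αstar - α)))
      ≤ ((f (A.mulVec α) / K
          + dotp (f' (A.mulVec α)) (A.mulVec (restr part k (s • (αstar - α))))
          + σ' / (2 * τ) * sqnorm (A.mulVec (restr part k (s • (αstar - α))))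
          + ∑ i ∈ block part k, (s * Ls i + (1 - s) * Lα i
            - μ / 2 * s * (1 - s) * (αstar i - α i) ^ 2) : ℝ) : EReal) := by
    intro k
    unfold Gk
    have hsumle : ∑ i ∈ block part k, ℓ i (α i + restr part k (s • (αstar - α)) i)
        ≤ ((∑ i ∈ block part k, (s * Ls i + (1 - s) * Lα i
            - μ / 2 * s * (1 - s) * (αstar i - α i) ^ 2) : ℝ) : EReal) := by
      rw [aux_coe_sum]
      apply Finset.sum_le_sum
      intro i hi
      have hik : part i = k := by simpa [block] using hi
      have hval : α i + restr part k (s • (αstar - α)) i = s * αstar i + (1 - s) * α i := by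
        simp only [restr, if_pos hik, Pi.smul_apply, Pi.sub_apply, smul_eq_mul]
        ring
      rw [hval]
      exact sc_real (hℓsc i) (hLs i) (hLα i) hs0 hs1
    have h := add_le_add_right hsumle
      ((f (A.mulVec α) / K
        + dotp (f' (A.mulVec α)) (A.mulVec (restr part k (s • (αstar - α))))
        + σ' / (2 * τ) * sqnorm (A.mulVec (restr part k (s • (αstar - α)))) : ℝ) : EReal)
    rw [← EReal.coe_add] at h
    exact h
  have hkey := fun k => key_block f f' A ℓ part τ σ' Θ k (A.mulVec α) α (Δα k)
    hbot hΘ0 hΘ1 (hΔα k) (restr part k (s • (αstar - α))) (hΔhsupp k) _ _ (hG0 k) (hGh k)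
  -- the updated coordinates and their ℓ-values
  have hmem_block : ∀ i : Fin n, i ∈ block part (part i) := fun i => by simp [block]
  have hfinΔ : ∀ i, ℓ i (α i + Δα (part i) i) ≠ ⊤ := fun i => (hkey (part i)).1 i (hmem_block i)
  obtain ⟨LΔ, hLΔ⟩ : ∃ L : Fin n → ℝ, ∀ i, ℓ i (α i + Δα (part i) i) = ((L i : ℝ) : EReal) :=
    ⟨fun i => (ℓ i (α i + Δα (part i) i)).toReal,
      fun i => (EReal.coe_toReal (hfinΔ i) (hbot i _)).symm⟩
  have hkey2 : ∀ k, f (A.mulVec α) / K + dotp (f' (A.mulVec α)) (A.mulVec (Δα k))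
      + σ' / (2 * τ) * sqnorm (A.mulVec (Δα k)) + ∑ i ∈ block part k, LΔ i
      ≤ Θ * (f (A.mulVec α) / K + ∑ i ∈ block part k, Lα i)
        + (1 - Θ) * (f (A.mulVec α) / K
          + dotp (f' (A.mulVec α)) (A.mulVec (restr part k (s • (αstar - α))))
          + σ' / (2 * τ) * sqnorm (A.mulVec (restr part k (s • (αstar - α))))
          + ∑ i ∈ block part k, (s * Ls i + (1 - s) * Lα i
            - μ / 2 * s * (1 - s) * (αstar i - α i) ^ 2)) := by
    intro k
    have h := (hkey k).2
    have hcongr : ∑ i ∈ block part k, (ℓ i (α i + Δα k i)).toReal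
        = ∑ i ∈ block part k, LΔ i := by
      apply Finset.sum_congr rfl
      intro i hi
      have hik : part i = k := by simpa [block] using hi
      have h2 := hLΔ i
      rw [hik] at h2
      rw [h2]
      exact EReal.toReal_coe _
    rwa [hcongr] at h
  -- smoothness step for the f-part
  have hβ : ∀ k, restr part k (∑ j, Δα j) = Δα k :=
    restr_sum_blocks part Δα (fun j => (hΔα j).1)
  have hfplus : f (A.mulVec (α + γ • ∑ k, Δα k))
      ≤ f (A.mulVec α) + γ * (∑ k, dotp (f' (A.mulVec α)) (A.mulVec (Δα k)))
        + γ * (σ' / (2 * τ) * ∑ k, sqnorm (A.mulVec (Δα k))) := by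
    have hdiff : A.mulVec (α + γ • ∑ k, Δα k) - A.mulVec α
        = γ • A.mulVec (∑ k, Δα k) := by
      rw [Matrix.mulVec_add, Matrix.mulVec_smul]
      abel
    have hsm := hfsmooth (A.mulVec (α + γ • ∑ k, Δα k)) (A.mulVec α)
    rw [hdiff] at hsm
    have hd : dotp (f' (A.mulVec α)) (γ • A.mulVec (∑ k, Δα k))
        = γ * ∑ k, dotp (f' (A.mulVec α)) (A.mulVec (Δα k)) := by
      rw [dotp_smul_right, aux_mulVec_sum, dotp_sum_right]
    have hq : sqnorm (γ • A.mulVec (∑ k, Δα k)) = γ ^ 2 * sqnorm (A.mulVec (∑ k, Δα k)) :=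
      sqnorm_smul _ _
    have hsafe2 : sqnorm (A.mulVec (∑ k, Δα k))
        ≤ σ' / γ * ∑ k, sqnorm (A.mulVec (Δα k)) := by
      have h := hsafe (∑ k, Δα k)
      simpa only [hβ] using h
    rw [hd, hq] at hsm
    have h2 : 1 / (2 * τ) * (γ ^ 2 * sqnorm (A.mulVec (∑ k, Δα k)))
        ≤ 1 / (2 * τ) * (γ ^ 2 * (σ' / γ * ∑ k, sqnorm (A.mulVec (Δα k)))) := by
      apply mul_le_mul_of_nonneg_left _ (by positivity)
      exact mul_le_mul_of_nonneg_left hsafe2 (by positivity)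
    have h3 : 1 / (2 * τ) * (γ ^ 2 * (σ' / γ * ∑ k, sqnorm (A.mulVec (Δα k))))
        = γ * (σ' / (2 * τ) * ∑ k, sqnorm (A.mulVec (Δα k))) := by
      field_simp
    linarith
  -- convexity step for the ℓ-part
  have hβi : ∀ i, (∑ k, Δα k) i = Δα (part i) i := by
    intro i
    rw [Finset.sum_apply]
    apply Finset.sum_eq_single
    · intro j _ hj
      exact (hΔα j).1 i (fun hh => hj (by rw [← hh]))
    · intro h; exact absurd (Finset.mem_univ _) h
  have hlplus : ∀ i, ℓ i ((α + γ • ∑ k, Δα k) i)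
      ≤ ((γ * LΔ i + (1 - γ) * Lα i : ℝ) : EReal) := by
    intro i
    have hval : (α + γ • ∑ k, Δα k) i
        = γ * (α i + Δα (part i) i) + (1 - γ) * α i := by
      have h1 : (α + γ • ∑ k, Δα k) i = α i + γ * (∑ k, Δα k) i := by
        simp [Pi.add_apply, Pi.smul_apply, smul_eq_mul]
      rw [h1, hβi i]; ring
    rw [hval]
    refine le_trans (sc_real (hℓsc i) (hLΔ i) (hLα i) hγ0.le hγ1) ?_
    apply EReal.coe_le_coe_iff.2
    have h1γ : (0:ℝ) ≤ 1 - γ := by linarith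
    have h4 : 0 ≤ μ / 2 * γ * (1 - γ) * (α i + Δα (part i) i - α i) ^ 2 :=
      mul_nonneg (mul_nonneg (mul_nonneg (by linarith) hγ0.le) h1γ) (sq_nonneg _)
    linarith
  -- assemble the EReal bound on the new objective
  have hDplus : Dobj f A ℓ (α + γ • ∑ k, Δα k)
      ≤ ((f (A.mulVec α) + γ * (∑ k, dotp (f' (A.mulVec α)) (A.mulVec (Δα k)))
          + γ * (σ' / (2 * τ) * ∑ k, sqnorm (A.mulVec (Δα k)))
          + ∑ i, (γ * LΔ i + (1 - γ) * Lα i) : ℝ) : EReal) := by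
    unfold Dobj
    rw [EReal.coe_add]
    apply add_le_add
    · exact EReal.coe_le_coe_iff.2 hfplus
    · rw [aux_coe_sum]
      exact Finset.sum_le_sum fun i _ => hlplus i
  -- now the purely real computation
  have hchain : f (A.mulVec α) + γ * (∑ k, dotp (f' (A.mulVec α)) (A.mulVec (Δα k)))
      + γ * (σ' / (2 * τ) * ∑ k, sqnorm (A.mulVec (Δα k)))
      + ∑ i, (γ * LΔ i + (1 - γ) * Lα i)
      ≤ (f (A.mulVec α) + ∑ i, Lα i)
        - γ * (1 - Θ) * s * ((f (A.mulVec α) + ∑ i, Lα i)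
          - (f (A.mulVec αstar) + ∑ i, Ls i)) := by
    have hFsum : ∑ _k : Fin K, f (A.mulVec α) / (K:ℝ) = f (A.mulVec α) := by
      rw [Finset.sum_const, Finset.card_univ, Fintype.card_fin, nsmul_eq_mul]
      field_simp
    have hfibLΔ : ∑ k, ∑ i ∈ block part k, LΔ i = ∑ i, LΔ i := by
      simp only [block]
      exact Finset.sum_fiberwise _ _ _
    have hfibLα : ∑ k, ∑ i ∈ block part k, Lα i = ∑ i, Lα i := by
      simp only [block]
      exact Finset.sum_fiberwise _ _ _
    have hfibsc : ∑ k, ∑ i ∈ block part k, (s * Ls i + (1 - s) * Lα i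
        - μ / 2 * s * (1 - s) * (αstar i - α i) ^ 2)
        = ∑ i, (s * Ls i + (1 - s) * Lα i - μ / 2 * s * (1 - s) * (αstar i - α i) ^ 2) := by
      simp only [block]
      exact Finset.sum_fiberwise _ _ _
    have hsum := Finset.sum_le_sum (fun k (_ : k ∈ (Finset.univ : Finset (Fin K))) => hkey2 k)
    have hLHSeq : ∑ k, (f (A.mulVec α) / K + dotp (f' (A.mulVec α)) (A.mulVec (Δα k))
        + σ' / (2 * τ) * sqnorm (A.mulVec (Δα k)) + ∑ i ∈ block part k, LΔ i)
        = f (A.mulVec α) + (∑ k, dotp (f' (A.mulVec α)) (A.mulVec (Δα k)))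
          + σ' / (2 * τ) * (∑ k, sqnorm (A.mulVec (Δα k))) + ∑ i, LΔ i := by
      simp only [Finset.sum_add_distrib, ← Finset.mul_sum, hFsum, hfibLΔ]
    have hRHSeq : ∑ k, (Θ * (f (A.mulVec α) / K + ∑ i ∈ block part k, Lα i)
        + (1 - Θ) * (f (A.mulVec α) / K
          + dotp (f' (A.mulVec α)) (A.mulVec (restr part k (s • (αstar - α))))
          + σ' / (2 * τ) * sqnorm (A.mulVec (restr part k (s • (αstar - α))))
          + ∑ i ∈ block part k, (s * Ls i + (1 - s) * Lα i
            - μ / 2 * s * (1 - s) * (αstar i - α i) ^ 2)))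
        = Θ * (f (A.mulVec α) + ∑ i, Lα i)
          + (1 - Θ) * (f (A.mulVec α)
            + (∑ k, dotp (f' (A.mulVec α)) (A.mulVec (restr part k (s • (αstar - α)))))
            + σ' / (2 * τ) * (∑ k, sqnorm (A.mulVec (restr part k (s • (αstar - α)))))
            + ∑ i, (s * Ls i + (1 - s) * Lα i
              - μ / 2 * s * (1 - s) * (αstar i - α i) ^ 2)) := by
      simp only [Finset.sum_add_distrib, ← Finset.mul_sum, hFsum, hfibLα, hfibsc]
    rw [hLHSeq, hRHSeq] at hsum
    -- identify the linear term at the comparison point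
    have hSd : (∑ k, dotp (f' (A.mulVec α)) (A.mulVec (restr part k (s • (αstar - α)))))
        = s * (dotp (f' (A.mulVec α)) (A.mulVec αstar)
            - dotp (f' (A.mulVec α)) (A.mulVec α)) := by
      rw [← dotp_sum_right, ← aux_mulVec_sum, sum_restr, Matrix.mulVec_smul, dotp_smul_right,
        Matrix.mulVec_sub, dotp_sub_right]
    have hconv := hfconv (A.mulVec αstar) (A.mulVec α)
    rw [dotp_sub_right] at hconv
    have hSdle : (∑ k, dotp (f' (A.mulVec α)) (A.mulVec (restr part k (s • (αstar - α)))))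
        ≤ s * (f (A.mulVec αstar) - f (A.mulVec α)) := by
      rw [hSd]
      exact mul_le_mul_of_nonneg_left (by linarith) hs0
    -- quadratic term at the comparison point
    have hSqle : (∑ k, sqnorm (A.mulVec (restr part k (s • (αstar - α)))))
        ≤ σmax * (s ^ 2 * sqnorm (αstar - α)) := by
      calc (∑ k, sqnorm (A.mulVec (restr part k (s • (αstar - α)))))
          ≤ ∑ k, σmax * sqnorm (restr part k (s • (αstar - α))) :=
            Finset.sum_le_sum fun k _ =>
              sigmaBlock_spectral A part hσmax k _ (hΔhsupp k)
        _ = σmax * ∑ k, sqnorm (restr part k (s • (αstar - α))) := by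
            rw [Finset.mul_sum]
        _ = σmax * sqnorm (s • (αstar - α)) := by rw [sum_sqnorm_restr]
        _ = σmax * (s ^ 2 * sqnorm (αstar - α)) := by rw [sqnorm_smul]
    -- strong convexity sum
    have hscsum : ∑ i, (s * Ls i + (1 - s) * Lα i
        - μ / 2 * s * (1 - s) * (αstar i - α i) ^ 2)
        = s * (∑ i, Ls i) + (1 - s) * (∑ i, Lα i)
          - μ / 2 * s * (1 - s) * sqnorm (αstar - α) := by
      simp only [Finset.sum_sub_distrib, Finset.sum_add_distrib, ← Finset.mul_sum,
        sqnorm, Pi.sub_apply]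
    -- the cancellation coming from the choice of s
    have hcancel : σ' / (2 * τ) * (σmax * (s ^ 2 * sqnorm (αstar - α)))
        = μ / 2 * s * (1 - s) * sqnorm (αstar - α) := by
      rw [hsdef]
      field_simp
      ring
    -- bound the inner quantity
    have hinner : f (A.mulVec α)
        + (∑ k, dotp (f' (A.mulVec α)) (A.mulVec (restr part k (s • (αstar - α)))))
        + σ' / (2 * τ) * (∑ k, sqnorm (A.mulVec (restr part k (s • (αstar - α)))))
        + ∑ i, (s * Ls i + (1 - s) * Lα i - μ / 2 * s * (1 - s) * (αstar i - α i) ^ 2)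
        ≤ (1 - s) * (f (A.mulVec α) + ∑ i, Lα i)
          + s * (f (A.mulVec αstar) + ∑ i, Ls i) := by
      have hq2 : σ' / (2 * τ) * (∑ k, sqnorm (A.mulVec (restr part k (s • (αstar - α)))))
          ≤ σ' / (2 * τ) * (σmax * (s ^ 2 * sqnorm (αstar - α))) :=
        mul_le_mul_of_nonneg_left hSqle (by positivity)
      rw [hscsum]
      calc f (A.mulVec α)
          + (∑ k, dotp (f' (A.mulVec α)) (A.mulVec (restr part k (s • (αstar - α)))))
          + σ' / (2 * τ) * (∑ k, sqnorm (A.mulVec (restr part k (s • (αstar - α)))))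
          + (s * (∑ i, Ls i) + (1 - s) * (∑ i, Lα i)
            - μ / 2 * s * (1 - s) * sqnorm (αstar - α))
          ≤ f (A.mulVec α) + s * (f (A.mulVec αstar) - f (A.mulVec α))
            + μ / 2 * s * (1 - s) * sqnorm (αstar - α)
            + (s * (∑ i, Ls i) + (1 - s) * (∑ i, Lα i)
              - μ / 2 * s * (1 - s) * sqnorm (αstar - α)) :=
            add_le_add (add_le_add (add_le_add le_rfl hSdle) (hq2.trans_eq hcancel)) le_rfl
        _ = (1 - s) * (f (A.mulVec α) + ∑ i, Lα i)
            + s * (f (A.mulVec αstar) + ∑ i, Ls i) := by ring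
    -- combine everything
    have hT := hsum.trans (add_le_add_right
      (mul_le_mul_of_nonneg_left hinner (by linarith : (0:ℝ) ≤ 1 - Θ)) _)
    have hLHS2 : f (A.mulVec α) + γ * (∑ k, dotp (f' (A.mulVec α)) (A.mulVec (Δα k)))
        + γ * (σ' / (2 * τ) * ∑ k, sqnorm (A.mulVec (Δα k)))
        + ∑ i, (γ * LΔ i + (1 - γ) * Lα i)
        = (1 - γ) * (f (A.mulVec α) + ∑ i, Lα i)
          + γ * (f (A.mulVec α) + (∑ k, dotp (f' (A.mulVec α)) (A.mulVec (Δα k)))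
            + σ' / (2 * τ) * (∑ k, sqnorm (A.mulVec (Δα k))) + ∑ i, LΔ i) := by
      simp only [Finset.sum_add_distrib, ← Finset.mul_sum]
      ring
    rw [hLHS2]
    calc (1 - γ) * (f (A.mulVec α) + ∑ i, Lα i)
        + γ * (f (A.mulVec α) + (∑ k, dotp (f' (A.mulVec α)) (A.mulVec (Δα k)))
          + σ' / (2 * τ) * (∑ k, sqnorm (A.mulVec (Δα k))) + ∑ i, LΔ i)
        ≤ (1 - γ) * (f (A.mulVec α) + ∑ i, Lα i)
          + γ * (Θ * (f (A.mulVec α) + ∑ i, Lα i)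
            + (1 - Θ) * ((1 - s) * (f (A.mulVec α) + ∑ i, Lα i)
              + s * (f (A.mulVec αstar) + ∑ i, Ls i))) :=
          add_le_add_right (mul_le_mul_of_nonneg_left hT hγ0.le) _
      _ = (f (A.mulVec α) + ∑ i, Lα i)
          - γ * (1 - Θ) * s * ((f (A.mulVec α) + ∑ i, Lα i)
            - (f (A.mulVec αstar) + ∑ i, Ls i)) := by ring
  -- conclude
  rw [hDα_eq, hDs_eq]
  have hfinal1 : Dobj f A ℓ (α + γ • ∑ k, Δα k)
      ≤ (((f (A.mulVec α) + ∑ i, Lα i)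
          - γ * (1 - Θ) * s * ((f (A.mulVec α) + ∑ i, Lα i)
            - (f (A.mulVec αstar) + ∑ i, Ls i)) : ℝ) : EReal) :=
    le_trans hDplus (EReal.coe_le_coe_iff.2 hchain)
  calc Dobj f A ℓ (α + γ • ∑ k, Δα k)
        - ((f (A.mulVec αstar) + ∑ i, Ls i : ℝ) : EReal)
      ≤ (((f (A.mulVec α) + ∑ i, Lα i)
          - γ * (1 - Θ) * s * ((f (A.mulVec α) + ∑ i, Lα i)
            - (f (A.mulVec αstar) + ∑ i, Ls i)) : ℝ) : EReal)
        - ((f (A.mulVec αstar) + ∑ i, Ls i : ℝ) : EReal) :=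
        EReal.sub_le_sub hfinal1 le_rfl
    _ = (((1 - γ * (1 - Θ) * s)
          * ((f (A.mulVec α) + ∑ i, Lα i) - (f (A.mulVec αstar) + ∑ i, Ls i)) : ℝ) : EReal) := by
        rw [← EReal.coe_sub]
        exact EReal.coe_eq_coe_iff.2 (by ring)
    _ = ((1 - γ * (1 - Θ) * s : ℝ) : EReal)
          * (((f (A.mulVec α) + ∑ i, Lα i : ℝ) : EReal)
            - ((f (A.mulVec αstar) + ∑ i, Ls i : ℝ) : EReal)) := by
        rw [← EReal.coe_sub, ← EReal.coe_mul]

end ProxCoCoA
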